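/- arXiv:1406.2444 — 4 statements merged into one kernel-verified Lean document; each statement's English description precedes it below -/
import Mathlib

section
/- With u(r) = f(r²) where f(ρ) = (1/(2λ²))(λ√ρ·√(1-λ²ρ) + arccos(λ√ρ)) is the Pansu profile in the squared radial variable, the function g(ρ) := f(ρ)² = ((1/(2λ²))(λ√ρ√(1-λ²ρ) + arccos(λ√ρ)))² (so that t = √g) satisfies (g')² = λ²ρ·g/(1 - λ²ρ) for 0 < ρ < 1/λ². -/
theorem stmt_4 (lam : ℝ) (hlam : 0 < lam) (g : ℝ → ℝ)
    (hg : ∀ ρ : ℝ, g ρ =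
      ((1 / (2 * lam ^ 2)) * (lam * Real.sqrt ρ * Real.sqrt (1 - lam ^ 2 * ρ)
        + Real.arccos (lam * Real.sqrt ρ))) ^ 2) :
    ∀ ρ : ℝ, 0 < ρ → ρ < 1 / lam ^ 2 →
      (deriv g ρ) ^ 2 = lam ^ 2 * ρ * g ρ / (1 - lam ^ 2 * ρ) := by
  intro ρ hρ hρ'
  have hl2 : (0:ℝ) < lam ^ 2 := by positivity
  have h1 : lam ^ 2 * ρ < 1 := by
    rw [lt_div_iff₀ hl2] at hρ'; nlinarith
  have hs0 : 0 < 1 - lam ^ 2 * ρ := by linarith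
  set r := Real.sqrt ρ with hrdef
  set s := Real.sqrt (1 - lam ^ 2 * ρ) with hsdef
  have hrpos : 0 < r := Real.sqrt_pos.2 hρ
  have hspos : 0 < s := Real.sqrt_pos.2 hs0
  have hr2 : r ^ 2 = ρ := Real.sq_sqrt hρ.le
  have hs2 : s ^ 2 = 1 - lam ^ 2 * ρ := Real.sq_sqrt hs0.le
  have hlr1 : lam * r < 1 := by nlinarith
  have hlrpos : 0 < lam * r := by positivity
  -- derivative of sqrt
  have hdr : HasDerivAt (fun x : ℝ => Real.sqrt x) (1 / (2 * r)) ρ := by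
    simpa [hrdef] using Real.hasDerivAt_sqrt hρ.ne'
  have hdlr : HasDerivAt (fun x : ℝ => lam * Real.sqrt x) (lam * (1 / (2 * r))) ρ :=
    hdr.const_mul lam
  -- derivative of sqrt (1 - lam^2 x)
  have hinner : HasDerivAt (fun x : ℝ => 1 - lam ^ 2 * x) (-lam ^ 2) ρ := by
    simpa using ((hasDerivAt_id ρ).const_mul (lam ^ 2)).const_sub 1
  have hds : HasDerivAt (fun x : ℝ => Real.sqrt (1 - lam ^ 2 * x))
      (1 / (2 * s) * (-lam ^ 2)) ρ := by
    simpa [hsdef, Function.comp_def] using (Real.hasDerivAt_sqrt hs0.ne').comp ρ hinner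
  -- derivative of arccos (lam * sqrt x)
  have harc : HasDerivAt (fun x : ℝ => Real.arccos (lam * Real.sqrt x))
      (-(1 / s) * (lam * (1 / (2 * r)))) ρ := by
    have h := (Real.hasDerivAt_arccos (by linarith : lam * r ≠ -1)
      (ne_of_lt hlr1)).comp ρ hdlr
    have heq : Real.sqrt (1 - (lam * r) ^ 2) = s := by
      rw [hsdef]; congr 1; nlinarith
    simpa [heq, Function.comp_def] using h
  -- full derivative of F
  have hF : HasDerivAt (fun x : ℝ =>
      (1 / (2 * lam ^ 2)) * (lam * Real.sqrt x * Real.sqrt (1 - lam ^ 2 * x)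
        + Real.arccos (lam * Real.sqrt x)))
      ((1 / (2 * lam ^ 2)) * ((lam * (1 / (2 * r))) * s
        + (lam * r) * (1 / (2 * s) * (-lam ^ 2)) + (-(1 / s) * (lam * (1 / (2 * r)))))) ρ := by
    exact ((hdlr.mul hds).add harc).const_mul (1 / (2 * lam ^ 2))
  set D : ℝ := (1 / (2 * lam ^ 2)) * ((lam * (1 / (2 * r))) * s
        + (lam * r) * (1 / (2 * s) * (-lam ^ 2)) + (-(1 / s) * (lam * (1 / (2 * r))))) with hDdef
  have hDval : D = -(lam * r) / (2 * s) := by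
    rw [hDdef]
    field_simp
    linear_combination hs2 + lam ^ 2 * hr2
  have hgfun : g = fun x : ℝ =>
      ((1 / (2 * lam ^ 2)) * (lam * Real.sqrt x * Real.sqrt (1 - lam ^ 2 * x)
        + Real.arccos (lam * Real.sqrt x))) ^ 2 := funext hg
  have hgd : HasDerivAt g (2 * ((1 / (2 * lam ^ 2)) * (lam * r * s
        + Real.arccos (lam * r))) ^ 1 * D) ρ := by
    rw [hgfun]
    simpa [hrdef, hsdef, Pi.pow_def] using hF.pow 2
  rw [hgd.deriv, hg ρ, hDval]
  rw [← hrdef, ← hsdef]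
  have hsne : s ≠ 0 := hspos.ne'
  rw [← hs2, ← hr2]
  field_simp
end

section
/- Any solution g > 0 of the ODE g'(ρ) = -√(λ²ρ·g(ρ)/(1-λ²ρ)) on (0, 1/λ²) with boundary condition lim_{ρ→1/λ²} g(ρ) = 0 satisfies √(g(ρ)) = (1/(2λ²))(λ√ρ·√(1-λ²ρ) + arccos(λ√ρ)). Equivalently: the function h(ρ) = √(g(ρ)) satisfies h'(ρ) = -(1/2)√(λ²ρ/(1-λ²ρ)), and integration gives the stated formula. -/
/-!
Writing the ODE for `h = √g` removes `g` from its right side: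
`h' = g' / (2 √g) = -λ√ρ / (2 √(1 - λ²ρ))`. The claimed closed form has the same derivative and
vanishes at `ρ = 1/λ²`, as does `h` by the boundary condition, so the two agree on `(0, 1/λ²)`.
-/

open Real Set Filter Topology

theorem eqOn_Ioo_of_hasDerivAt_of_tendsto_nhdsLT {G : Type*} [NormedAddCommGroup G]
    [NormedSpace ℝ G] {f g f' : ℝ → G} {a b : ℝ} {L : G}
    (hf : ∀ x ∈ Ioo a b, HasDerivAt f (f' x) x) (hg : ∀ x ∈ Ioo a b, HasDerivAt g (f' x) x)
    (hfb : Tendsto f (𝓝[<] b) (𝓝 L)) (hgb : Tendsto g (𝓝[<] b) (𝓝 L)) :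
    EqOn f g (Ioo a b) := by
  intro x hx
  obtain ⟨c, hc⟩ := isOpen_Ioo.exists_eq_add_of_deriv_eq isPreconnected_Ioo
    (fun y hy ↦ (hf y hy).differentiableAt.differentiableWithinAt)
    (fun y hy ↦ (hg y hy).differentiableAt.differentiableWithinAt)
    (fun y hy ↦ (hf y hy).deriv.trans (hg y hy).deriv.symm)
  have hfb' : Tendsto f (𝓝[<] b) (𝓝 (L + c)) := by
    refine (hgb.add_const c).congr' ?_
    filter_upwards [Ioo_mem_nhdsLT (hx.1.trans hx.2)] with y hy using (hc hy).symm
  have hc0 : c = 0 := by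
    simpa using tendsto_nhds_unique hfb' hfb
  simpa [hc0] using hc hx

theorem hasDerivAt_sqrt_of_hasDerivAt_eq_neg_sqrt {g : ℝ → ℝ} {lam x : ℝ} (hlam : 0 ≤ lam)
    (hx : 0 ≤ x) (hgx : 0 < g x)
    (hg : HasDerivAt g (-√(lam ^ 2 * x * g x / (1 - lam ^ 2 * x))) x) :
    HasDerivAt (fun ρ ↦ √(g ρ)) (-(lam * √x) / (2 * √(1 - lam ^ 2 * x))) x := by
  refine ((hasDerivAt_sqrt hgx.ne').comp x hg).congr_deriv ?_
  rw [sqrt_div (by positivity), sqrt_mul (by positivity), sqrt_mul (sq_nonneg lam),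
    sqrt_sq hlam]
  field_simp [(sqrt_pos.mpr hgx).ne']

noncomputable def profile (lam ρ : ℝ) : ℝ :=
  1 / (2 * lam ^ 2) * (lam * √ρ * √(1 - lam ^ 2 * ρ) + arccos (lam * √ρ))

theorem hasDerivAt_profile {lam x : ℝ} (hlam : 0 < lam) (hx : 0 < x) (hx1 : lam ^ 2 * x < 1) :
    HasDerivAt (profile lam) (-(lam * √x) / (2 * √(1 - lam ^ 2 * x))) x := by
  have hsx : HasDerivAt (fun ρ ↦ lam * √ρ) (lam * (1 / (2 * √x))) x :=
    (hasDerivAt_sqrt hx.ne').const_mul lam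
  have hsy : HasDerivAt (fun ρ ↦ √(1 - lam ^ 2 * ρ))
      (1 / (2 * √(1 - lam ^ 2 * x)) * -lam ^ 2) x :=
    (hasDerivAt_sqrt (by linarith)).comp x
      (by simpa using ((hasDerivAt_id x).const_mul (lam ^ 2)).const_sub 1)
  have hu : (lam * √x) ^ 2 = lam ^ 2 * x := by rw [mul_pow, sq_sqrt hx.le]
  have hu1 : lam * √x < 1 := by nlinarith [sqrt_nonneg x]
  have hacos :=
    (hasDerivAt_arccos (x := lam * √x) (by nlinarith [sqrt_nonneg x]) hu1.ne).comp x hsx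
  refine (((hsx.mul hsy).add hacos).const_mul (1 / (2 * lam ^ 2))).congr_deriv ?_
  rw [hu]
  field_simp
  rw [sq_sqrt hx.le, sq_sqrt (by linarith)]
  ring

theorem continuous_profile (lam : ℝ) : Continuous (profile lam) := by
  unfold profile
  fun_prop

theorem profile_one_div_sq {lam : ℝ} (hlam : 0 < lam) : profile lam (1 / lam ^ 2) = 0 := by
  have h1 : lam ^ 2 * (1 / lam ^ 2) = 1 := by field_simp
  have h2 : lam * √(1 / lam ^ 2) = 1 := by
    rw [one_div, sqrt_inv, sqrt_sq hlam.le, mul_inv_cancel₀ hlam.ne']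
  rw [profile, h1, h2, sub_self, sqrt_zero, arccos_one]
  ring

theorem stmt_5 (lam : ℝ) (hlam : 0 < lam) (g : ℝ → ℝ)
    (hdiff : ∀ ρ ∈ Set.Ioo 0 (1 / lam ^ 2), DifferentiableAt ℝ g ρ)
    (hpos : ∀ ρ ∈ Set.Ioo 0 (1 / lam ^ 2), 0 < g ρ)
    (hode : ∀ ρ ∈ Set.Ioo 0 (1 / lam ^ 2),
      deriv g ρ = - Real.sqrt (lam ^ 2 * ρ * g ρ / (1 - lam ^ 2 * ρ)))
    (hbc : Filter.Tendsto g (nhdsWithin (1 / lam ^ 2) (Set.Iio (1 / lam ^ 2)))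
      (nhds 0)) :
    ∀ ρ ∈ Set.Ioo 0 (1 / lam ^ 2),
      Real.sqrt (g ρ) =
        (1 / (2 * lam ^ 2)) * (lam * Real.sqrt ρ * Real.sqrt (1 - lam ^ 2 * ρ)
          + Real.arccos (lam * Real.sqrt ρ)) := by
  have hdom : ∀ x ∈ Ioo 0 (1 / lam ^ 2), 0 < x ∧ lam ^ 2 * x < 1 := fun x hx ↦
    ⟨hx.1, (lt_div_iff₀' (by positivity)).mp hx.2⟩
  refine eqOn_Ioo_of_hasDerivAt_of_tendsto_nhdsLT (g := profile lam)
    (f' := fun x ↦ -(lam * √x) / (2 * √(1 - lam ^ 2 * x))) (fun x hx ↦ ?_)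
    (fun x hx ↦ hasDerivAt_profile hlam (hdom x hx).1 (hdom x hx).2) (by simpa using hbc.sqrt) ?_
  · exact hasDerivAt_sqrt_of_hasDerivAt_eq_neg_sqrt hlam.le (hdom x hx).1.le (hpos x hx)
      (hode x hx ▸ (hdiff x hx).hasDerivAt)
  · rw [← profile_one_div_sq hlam]
    exact ((continuous_profile lam).tendsto _).mono_left nhdsWithin_le_nhds
end

section
/- Suppose (α, β) solves the system α' = -α² + (1/(4n²))(β-c)((2n-1)β+c), β' = -2nβα on an interval, with β(s) ≥ 2c > 0 and α(s) > 0 and α'(s) < 0 for all s in the interval. Then α(s) ≥ (√(2n-1)/(2√2 n))·β(s) for all s in the interval. -/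
theorem stmt_9 (n : ℕ) (hn : 1 ≤ n) (c : ℝ) (hc : 0 < c)
    (I : Set ℝ) (hI : I.OrdConnected) (α β : ℝ → ℝ)
    (hα : ∀ s ∈ I, HasDerivAt α
      (-α s ^ 2 + (1 / (4 * (n : ℝ) ^ 2)) * (β s - c) * ((2 * n - 1) * β s + c)) s)
    (hβ : ∀ s ∈ I, HasDerivAt β (-2 * n * β s * α s) s)
    (hβ2c : ∀ s ∈ I, 2 * c ≤ β s)
    (hαpos : ∀ s ∈ I, 0 < α s)
    (hα' : ∀ s ∈ I, deriv α s < 0) :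
    ∀ s ∈ I, (Real.sqrt (2 * n - 1) / (2 * Real.sqrt 2 * n)) * β s ≤ α s := by
  intro s hs
  have hd := (hα s hs).deriv
  have h1 : -α s ^ 2 + (1 / (4 * (n : ℝ) ^ 2)) * (β s - c) * ((2 * n - 1) * β s + c) < 0 := by
    rw [← hd]; exact hα' s hs
  have hn1 : (1 : ℝ) ≤ n := by exact_mod_cast hn
  have hβs := hβ2c s hs
  have hαs := hαpos s hs
  have hsq : (0 : ℝ) ≤ 2 * n - 1 := by linarith
  have hs2n : Real.sqrt (2 * n - 1) ^ 2 = 2 * n - 1 := Real.sq_sqrt hsq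
  have hs2 : Real.sqrt 2 ^ 2 = 2 := Real.sq_sqrt (by norm_num)
  have hsnn : 0 ≤ Real.sqrt (2 * n - 1) := Real.sqrt_nonneg _
  have hs2nn : 0 ≤ Real.sqrt 2 := Real.sqrt_nonneg _
  have hnpos : (0 : ℝ) < n := by linarith
  have hx : (Real.sqrt (2 * n - 1) / (2 * Real.sqrt 2 * n) * β s) ^ 2
      = (2 * n - 1) / (8 * n ^ 2) * β s ^ 2 := by
    rw [mul_pow, div_pow, hs2n, mul_pow, mul_pow, hs2]
    ring
  have hβpos : 0 < β s := by linarith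
  have hxnn : 0 ≤ Real.sqrt (2 * n - 1) / (2 * Real.sqrt 2 * n) * β s := by positivity
  have h4 : (0:ℝ) < 4 * (n:ℝ)^2 := by positivity
  have key : (β s - c) * ((2*(n:ℝ)-1)*β s + c) < α s^2 * (4*(n:ℝ)^2) := by
    have heq : (β s - c) * ((2*(n:ℝ)-1)*β s + c) / (4*(n:ℝ)^2)
        = 1 / (4 * (n:ℝ)^2) * (β s - c) * ((2*(n:ℝ)-1)*β s + c) := by ring
    have h5 : (β s - c) * ((2*(n:ℝ)-1)*β s + c) / (4*(n:ℝ)^2) < α s ^ 2 := by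
      rw [heq]; linarith
    exact (div_lt_iff₀ h4).mp h5
  have hsq2 : (Real.sqrt (2 * n - 1) / (2 * Real.sqrt 2 * n) * β s) ^ 2 ≤ α s ^ 2 := by
    rw [hx, div_mul_eq_mul_div, div_le_iff₀ (by positivity : (0:ℝ) < 8 * (n:ℝ)^2)]
    nlinarith [key, hsq, hβs, hc, hβpos,
      mul_nonneg (mul_nonneg hsq (by linarith : (0:ℝ) ≤ β s - 2*c)) hβpos.le,
      mul_pos hc hβpos]
  have h := Real.sqrt_le_sqrt hsq2
  rwa [Real.sqrt_sq hxnn, Real.sqrt_sq hαs.le] at h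
end

section
/- Suppose α(s) → 0 and β(s) → c as s → +∞, where (α, β) solves α' = -α² + (1/(4n²))(β-c)((2n-1)β+c), β' = -2nβα on [s₀, ∞), with α > 0 and β > c throughout. Then the second derivative bound dα'/ds ≤ 2α³ - c²α holds for all s, i.e., α''(s) ≤ 2α(s)³ - c²α(s). -/
/-!
Differentiating the first equation along the flow gives
`α'' = 2α³ - c²α - α/(2n²) · (β - c)((4n² - 1)β + (2n² + 1)c)`,
and the subtracted term is nonnegative because `α > 0` and `β > c > 0`.
-/

open Set

theorem deriv_deriv_eq_of_forall_hasDerivAt {𝕜 F : Type*} [NontriviallyNormedField 𝕜]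
    [NormedAddCommGroup F] [NormedSpace 𝕜 F] {f g : 𝕜 → F} {g' : F} {S : Set 𝕜} {s : 𝕜}
    (hf : ∀ t ∈ S, HasDerivAt f (g t) t) (hs : s ∈ S) (hS : UniqueDiffWithinAt 𝕜 S s)
    (hg : HasDerivAt g g' s) (hdf : DifferentiableAt 𝕜 (deriv f) s) :
    deriv (deriv f) s = g' := by
  have heq : EqOn (deriv f) g S := fun t ht => (hf t ht).deriv
  calc deriv (deriv f) s = derivWithin (deriv f) S s := (hdf.derivWithin hS).symm
    _ = derivWithin g S s := derivWithin_congr heq (heq hs)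
    _ = g' := hg.hasDerivWithinAt.derivWithin hS

/-- The right-hand side of the equation for `α'`. -/
noncomputable def riccatiRhs (m c a b : ℝ) : ℝ :=
  -a ^ 2 + (1 / (4 * m ^ 2)) * (b - c) * ((2 * m - 1) * b + c)

theorem hasDerivAt_riccatiRhs {m c a' b' s : ℝ} {α β : ℝ → ℝ}
    (hα : HasDerivAt α a' s) (hβ : HasDerivAt β b' s) :
    HasDerivAt (fun t => riccatiRhs m c (α t) (β t))
      (-(2 * α s * a') + 1 / (4 * m ^ 2) *
        (b' * ((2 * m - 1) * β s + c) + (β s - c) * ((2 * m - 1) * b'))) s := by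
  have hP := ((hβ.sub_const c).fun_mul ((hβ.const_mul (2 * m - 1)).add_const c)).const_mul
    (1 / (4 * m ^ 2))
  have hrhs : (fun t => riccatiRhs m c (α t) (β t))
      = fun t => -α t ^ 2 + 1 / (4 * m ^ 2) * ((β t - c) * ((2 * m - 1) * β t + c)) := by
    funext t; unfold riccatiRhs; ring
  rw [hrhs]
  exact ((hα.fun_pow 2).fun_neg.fun_add hP).congr_deriv (by norm_num)

theorem riccatiRhs_deriv_le {m c a b : ℝ} (hm : 1 ≤ m) (hc : 0 < c) (ha : 0 < a) (hb : c < b) :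
    -(2 * a * riccatiRhs m c a b) + 1 / (4 * m ^ 2) *
        ((-2 * m * b * a) * ((2 * m - 1) * b + c) + (b - c) * ((2 * m - 1) * (-2 * m * b * a)))
      ≤ 2 * a ^ 3 - c ^ 2 * a := by
  have hm0 : m ≠ 0 := by positivity
  have hid : -(2 * a * riccatiRhs m c a b) + 1 / (4 * m ^ 2) *
        ((-2 * m * b * a) * ((2 * m - 1) * b + c) + (b - c) * ((2 * m - 1) * (-2 * m * b * a)))
      = 2 * a ^ 3 - c ^ 2 * a
        - a / (2 * m ^ 2) * ((b - c) * ((4 * m ^ 2 - 1) * b + (2 * m ^ 2 + 1) * c)) := by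
    unfold riccatiRhs
    field_simp
    ring
  have hfactor : 0 < (4 * m ^ 2 - 1) * b + (2 * m ^ 2 + 1) * c := by
    have : 0 < 4 * m ^ 2 - 1 := by nlinarith
    have : 0 < b := hc.trans hb
    positivity
  have hb' : 0 < b - c := sub_pos.mpr hb
  rw [hid]
  have : 0 ≤ a / (2 * m ^ 2) * ((b - c) * ((4 * m ^ 2 - 1) * b + (2 * m ^ 2 + 1) * c)) := by
    positivity
  linarith

theorem stmt_16_general (n : ℕ) (hn : 1 ≤ n) (c : ℝ) (hc : 0 < c) (s₀ : ℝ)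
    (α β : ℝ → ℝ)
    (hα : ∀ s : ℝ, s₀ ≤ s → HasDerivAt α
      (-α s ^ 2 + (1 / (4 * (n : ℝ) ^ 2)) * (β s - c) * ((2 * n - 1) * β s + c)) s)
    (hβ : ∀ s : ℝ, s₀ ≤ s → HasDerivAt β (-2 * n * β s * α s) s)
    (hα2 : ∀ s : ℝ, s₀ ≤ s → DifferentiableAt ℝ (deriv α) s)
    (hαpos : ∀ s : ℝ, s₀ ≤ s → 0 < α s)
    (hβc : ∀ s : ℝ, s₀ ≤ s → c < β s) :
    ∀ s : ℝ, s₀ ≤ s → deriv (deriv α) s ≤ 2 * α s ^ 3 - c ^ 2 * α s := by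
  intro s hs
  have hα' : ∀ t ∈ Ici s₀, HasDerivAt α (riccatiRhs n c (α t) (β t)) t := fun t ht => hα t ht
  rw [deriv_deriv_eq_of_forall_hasDerivAt hα' hs (uniqueDiffOn_Ici s₀ s hs)
    (hasDerivAt_riccatiRhs (hα s hs) (hβ s hs)) (hα2 s hs)]
  exact riccatiRhs_deriv_le (by exact_mod_cast hn) hc (hαpos s hs) (hβc s hs)

theorem stmt_16 (n : ℕ) (hn : 1 ≤ n) (c : ℝ) (hc : 0 < c) (s₀ : ℝ)
    (α β : ℝ → ℝ)
    (hα : ∀ s : ℝ, s₀ ≤ s → HasDerivAt α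
      (-α s ^ 2 + (1 / (4 * (n : ℝ) ^ 2)) * (β s - c) * ((2 * n - 1) * β s + c)) s)
    (hβ : ∀ s : ℝ, s₀ ≤ s → HasDerivAt β (-2 * n * β s * α s) s)
    (hα2 : ∀ s : ℝ, s₀ ≤ s → DifferentiableAt ℝ (deriv α) s)
    (hαpos : ∀ s : ℝ, s₀ ≤ s → 0 < α s)
    (hβc : ∀ s : ℝ, s₀ ≤ s → c < β s)
    (hαlim : Filter.Tendsto α Filter.atTop (nhds 0))
    (hβlim : Filter.Tendsto β Filter.atTop (nhds c)) :
    ∀ s : ℝ, s₀ ≤ s → deriv (deriv α) s ≤ 2 * α s ^ 3 - c ^ 2 * α s :=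
  stmt_16_general n hn c hc s₀ α β hα hβ hα2 hαpos hβc
end
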